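/- arXiv:1212.0751 — 2 statements merged into one kernel-verified Lean document; each statement's English description precedes it below -/
import Mathlib

section
/- Let T be a binary tree of size n. For every k ≥ 0, the coefficient of x^k in the Tamari polynomial B_T equals the number of binary trees T' of size n with T' ≤ T in the Tamari order whose left border has exactly k nodes. -/
open Polynomial

/-- A binary tree: either the empty tree or a pair of binary trees
(left and right subtrees) grafted on an internal node. -/
inductive BinTree : Type
  | leaf : BinTree
  | node : BinTree → BinTree → BinTree

namespace BinTree

/-- The size of a binary tree: its number of internal nodes. -/
def size : BinTree → ℕ
  | leaf => 0
  | node l r => l.size + r.size + 1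

/-- One right rotation somewhere in the tree: `Rot T T'` means that `T'` is obtained
from `T` by replacing one subtree of the form `y(x(A,B),C)` by `x(A,y(B,C))`. -/
inductive Rot : BinTree → BinTree → Prop
  | root (A B C : BinTree) : Rot (node (node A B) C) (node A (node B C))
  | left {L L' : BinTree} (R : BinTree) : Rot L L' → Rot (node L R) (node L' R)
  | right (L : BinTree) {R R' : BinTree} : Rot R R' → Rot (node L R) (node L R')

/-- The Tamari order: `TamariLE T T'` iff `T'` is obtained from `T` by a (possibly empty)
sequence of right rotations. -/
def TamariLE (T T' : BinTree) : Prop := Relation.ReflTransGen Rot T T'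

/-- The Tamari polynomial `B_T ∈ ℤ[x]`: `B_∅ = 1` and for `T = x(L,R)`, `B_T` is the
unique polynomial with `(x-1)·B_T = x·B_L·(x·B_R - B_R(1))` (exact division by the
monic polynomial `X - 1`, the right-hand side vanishing at `x = 1`). -/
noncomputable def tamPoly : BinTree → Polynomial ℤ
  | leaf => 1
  | node l r =>
      (X * tamPoly l * (X * tamPoly r - C ((tamPoly r).eval 1))) /ₘ (X - C 1)

/-- The mirror Tamari polynomial, obtained by exchanging the roles of the left and
right subtrees in the recursive definition of the Tamari polynomial. -/
noncomputable def tamPolyMirror : BinTree → Polynomial ℤ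
  | leaf => 1
  | node l r =>
      (X * tamPolyMirror r * (X * tamPolyMirror l - C ((tamPolyMirror l).eval 1))) /ₘ (X - C 1)

/-- The number of nodes on the left border of a binary tree. -/
def leftBorder : BinTree → ℕ
  | leaf => 0
  | node l _ => l.leftBorder + 1

/-- The number of nodes on the right border of a binary tree. -/
def rightBorder : BinTree → ℕ
  | leaf => 0
  | node _ r => r.rightBorder + 1

/-- `inSub T a b`: in the unique binary-search-tree labelling of `T` by `1,…,size T`
(all labels of the left subtree of a node are smaller than its label, all labels of its
right subtree are larger), the node labelled `a` belongs to the subtree rooted at the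
node labelled `b` (in particular `inSub T a a` holds for every node label `a`). -/
def inSub : BinTree → ℕ → ℕ → Prop
  | leaf => fun _ _ => False
  | node l r => fun a b =>
      (b = l.size + 1 ∧ 1 ≤ a ∧ a ≤ l.size + r.size + 1) ∨
      inSub l a b ∨
      (l.size + 1 < a ∧ l.size + 1 < b ∧ inSub r (a - (l.size + 1)) (b - (l.size + 1)))

/-- The binary search tree poset of `T`: `bstRel T a b` iff `a ≺_T b`, i.e. `a ≠ b` and
the node labelled `a` is in the subtree rooted at the node labelled `b`. -/
def bstRel (T : BinTree) (a b : ℕ) : Prop := a ≠ b ∧ inSub T a b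

/-- The increasing forest `inc(T)`: `a ≺ b` iff `a < b` and `a ≺_T b`. -/
def incRel (T : BinTree) (a b : ℕ) : Prop := a < b ∧ bstRel T a b

/-- The decreasing forest `dec(T)`: `b ≺ a` iff `b > a` and `b ≺_T a`. -/
def decRel (T : BinTree) (a b : ℕ) : Prop := b < a ∧ bstRel T a b

/-- The relations of the interval-poset `IP[T,T']`: exactly those of `dec(T)`
together with those of `inc(T')`. -/
def IPrel (T T' : BinTree) (a b : ℕ) : Prop := decRel T a b ∨ incRel T' a b

end BinTree

open BinTree

/-- `σ` is a linear extension of the strict relation `rel` on `{1,…,n}`: reading the word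
`σ(1)…σ(n)` (the `i`-th letter being the label `(σ i : ℕ) + 1`), whenever `rel a b` holds
the letter `a` appears before the letter `b`. -/
def IsLinExt (n : ℕ) (rel : ℕ → ℕ → Prop) (σ : Equiv.Perm (Fin n)) : Prop :=
  ∀ i j : Fin n, rel ((σ i : ℕ) + 1) ((σ j : ℕ) + 1) → i < j

/-- An interval-poset of size `n`: a (strict) poset on `{1,…,n}` such that
`a ≺ c` implies `b ≺ c` for all `a < b < c`, and `c ≺ a` implies `b ≺ a` for all
`a < b < c`. -/
def IsIntervalPoset (n : ℕ) (rel : ℕ → ℕ → Prop) : Prop :=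
  (∀ a b, rel a b → 1 ≤ a ∧ a ≤ n ∧ 1 ≤ b ∧ b ≤ n) ∧
  (∀ a, ¬ rel a a) ∧
  (∀ a b c, rel a b → rel b c → rel a c) ∧
  (∀ a b c, a < b → b < c → rel a c → rel b c) ∧
  (∀ a b c, a < b → b < c → rel c a → rel b a)

/-- `trees(P)` : the number of connected components of the forest formed by the decreasing
relations of `P`, i.e. the number of `k ∈ {1,…,n}` such that there is no `j < k`
with `k ≺_P j`. -/
noncomputable def treeStat (n : ℕ) (rel : ℕ → ℕ → Prop) : ℕ :=
  Set.ncard {k : ℕ | 1 ≤ k ∧ k ≤ n ∧ ∀ j, j < k → ¬ rel k j}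

/-- The composition `𝔹(I1,I2)` of two interval-posets of sizes `k1` and `k2`:
the set of interval-posets `I` of size `k1+k2+1` such that
(i) the relations of `I` among `1,…,k1` are exactly those of `I1`,
(ii) the relations of `I` among `k1+2,…,k1+k2+1` are exactly those of `I2` shifted
by `k1+1`, (iii) `i ≺_I k1+1` for all `i ≤ k1`, and (iv) there is no relation
`k1+1 ≺_I j` for `j > k1+1`. -/
def Comp (k1 k2 : ℕ) (I1 I2 : ℕ → ℕ → Prop) : Set (ℕ → ℕ → Prop) :=
  {I | IsIntervalPoset (k1 + k2 + 1) I ∧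
    (∀ a b, 1 ≤ a → a ≤ k1 → 1 ≤ b → b ≤ k1 → (I a b ↔ I1 a b)) ∧
    (∀ a b, k1 + 2 ≤ a → a ≤ k1 + k2 + 1 → k1 + 2 ≤ b → b ≤ k1 + k2 + 1 →
      (I a b ↔ I2 (a - (k1 + 1)) (b - (k1 + 1)))) ∧
    (∀ i, 1 ≤ i → i ≤ k1 → I i (k1 + 1)) ∧
    (∀ j, k1 + 1 < j → ¬ I (k1 + 1) j)}

/-- The co-inversions of a permutation `σ` of `{1,…,n}` (written as the word
`σ(1)…σ(n)`): pairs `(σ(i), σ(j))` with `i < j` and `σ(i) > σ(j)`. -/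
def coinv (n : ℕ) (σ : Equiv.Perm (Fin n)) : Set (Fin n × Fin n) :=
  {p | ∃ i j : Fin n, i < j ∧ σ j < σ i ∧ p = (σ i, σ j)}

/-!
The trees below `x(L,R)` in the Tamari order are exactly the trees `graft l r p` obtained from
`x(l,r)`, with `l ≤ L` and `r ≤ R`, by `p ≤ leftBorder r` left rotations pushing the root down
the left border of `r`, and each such tree arises from a unique triple `(l, r, p)`. Its left
border has `leftBorder l + 1 + p` nodes, so summing the geometric series in `p` gives
`(x - 1) · Σ_{t ≤ x(L,R)} x^(leftBorder t) = x · B_L · (x · B_R - B_R(1))`, the defining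
recursion of the Tamari polynomial.
-/

lemma sub_one_mul_sum_geom_sum {R ι : Type*} [CommRing R] (x : R) (s : Finset ι) (f : ι → ℕ) :
    (x - 1) * ∑ i ∈ s, ∑ p ∈ Finset.range (f i + 1), x ^ p = x * ∑ i ∈ s, x ^ f i - s.card := by
  simp only [Finset.mul_sum s, mul_geom_sum, pow_succ, Finset.sum_sub_distrib, Finset.sum_const,
    nsmul_one, mul_comm x]

lemma coeff_sum_X_pow {R ι : Type*} [Semiring R] (s : Finset ι) (f : ι → ℕ) (k : ℕ) :
    (∑ i ∈ s, (X : R[X]) ^ f i).coeff k = {i ∈ s | f i = k}.card := by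
  simp [Polynomial.finsetSum_coeff, Polynomial.coeff_X_pow, eq_comm]

namespace BinTree

deriving instance DecidableEq for BinTree

/-- `graft l r p` is the tree `x(l,r)` with its root moved `p` steps down the left border of `r`
(the result is junk when `p > r.leftBorder`). -/
def graft (l : BinTree) : BinTree → ℕ → BinTree
  | r, 0 => node l r
  | node a b, p + 1 => node (graft l a p) b
  | leaf, _ + 1 => node l leaf
termination_by structural _ p => p

@[simp]
lemma graft_zero (l r : BinTree) : graft l r 0 = node l r := rfl

@[simp]
lemma graft_succ_node (l a b : BinTree) (p : ℕ) :
    graft l (node a b) (p + 1) = node (graft l a p) b := rfl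

lemma size_graft (l r : BinTree) (p : ℕ) : (graft l r p).size = l.size + r.size + 1 := by
  induction r generalizing p with
  | leaf => cases p <;> simp [graft, size]
  | node a b iha =>
    cases p with
    | zero => simp [size]
    | succ p => simp only [graft_succ_node, size, iha]; omega

lemma leftBorder_graft (l : BinTree) {r : BinTree} {p : ℕ} (hp : p ≤ r.leftBorder) :
    (graft l r p).leftBorder = l.leftBorder + 1 + p := by
  induction r generalizing p with
  | leaf =>
    obtain rfl : p = 0 := by simpa [leftBorder] using hp
    simp [leftBorder]
  | node a b iha =>
    cases p with
    | zero => simp [leftBorder]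
    | succ p =>
      simp only [leftBorder, Nat.add_le_add_iff_right] at hp
      simp only [graft_succ_node, leftBorder, iha hp]; omega

lemma graft_succ_ne_node {l l' r r' : BinTree} {p : ℕ} (hl : l.size = l'.size)
    (hp : p + 1 ≤ r.leftBorder) : graft l r (p + 1) ≠ node l' r' := by
  cases r with
  | leaf => simp [leftBorder] at hp
  | node a b =>
    intro h
    have hsize := congrArg size (node.inj h).1
    rw [size_graft] at hsize
    omega

lemma graft_inj {l₁ l₂ r₁ r₂ : BinTree} {p₁ p₂ : ℕ} (hl : l₁.size = l₂.size)
    (hp₁ : p₁ ≤ r₁.leftBorder) (hp₂ : p₂ ≤ r₂.leftBorder)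
    (h : graft l₁ r₁ p₁ = graft l₂ r₂ p₂) : l₁ = l₂ ∧ r₁ = r₂ ∧ p₁ = p₂ := by
  induction p₁ generalizing r₁ r₂ p₂ with
  | zero =>
    cases p₂ with
    | zero => simpa using h
    | succ p₂ => exact absurd h.symm (graft_succ_ne_node hl.symm hp₂)
  | succ p₁ ih =>
    cases p₂ with
    | zero => exact absurd h (graft_succ_ne_node hl hp₁)
    | succ p₂ =>
      cases r₁ with
      | leaf => simp [leftBorder] at hp₁
      | node a₁ b₁ =>
        cases r₂ with
        | leaf => simp [leftBorder] at hp₂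
        | node a₂ b₂ =>
          simp only [leftBorder, Nat.add_le_add_iff_right] at hp₁ hp₂
          obtain ⟨hgraft, rfl⟩ := node.inj h
          obtain ⟨rfl, rfl, rfl⟩ := ih hp₁ hp₂ hgraft
          exact ⟨rfl, rfl, rfl⟩

lemma Rot.size_eq {t t' : BinTree} (h : Rot t t') : t.size = t'.size := by
  induction h with
  | root A B C => simp only [size]; omega
  | left R _ ih => simp [size, ih]
  | right L _ ih => simp [size, ih]

lemma TamariLE.size_eq {t t' : BinTree} (h : TamariLE t t') : t.size = t'.size := by
  induction h with
  | refl => rfl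
  | tail _ h ih => exact ih.trans h.size_eq

lemma TamariLE.node_left {l l' : BinTree} (r : BinTree) (h : TamariLE l l') :
    TamariLE (node l r) (node l' r) :=
  Relation.ReflTransGen.lift (fun t => node t r) (fun _ _ => Rot.left r) _ _ h

lemma TamariLE.node_right (l : BinTree) {r r' : BinTree} (h : TamariLE r r') :
    TamariLE (node l r) (node l r') :=
  Relation.ReflTransGen.lift (node l) (fun _ _ => Rot.right l) _ _ h

lemma graft_tamariLE_node (l : BinTree) {r : BinTree} {p : ℕ} (hp : p ≤ r.leftBorder) :
    TamariLE (graft l r p) (node l r) := by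
  induction r generalizing p with
  | leaf =>
    obtain rfl : p = 0 := by simpa [leftBorder] using hp
    exact .refl
  | node a b iha =>
    cases p with
    | zero => exact .refl
    | succ p =>
      simp only [leftBorder, Nat.add_le_add_iff_right] at hp
      exact ((iha hp).node_left b).tail (Rot.root l a b)

lemma exists_graft_of_rot_node {l r t : BinTree} (h : Rot t (node l r)) :
    ∃ l' r' p', t = graft l' r' p' ∧ p' ≤ r'.leftBorder ∧ TamariLE l' l ∧ TamariLE r' r := by
  cases h with
  | root A B C => exact ⟨l, node B C, 1, rfl, by simp [leftBorder], .refl, .refl⟩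
  | left _ hl => exact ⟨_, r, 0, rfl, Nat.zero_le _, .single hl, .refl⟩
  | right _ hr => exact ⟨l, _, 0, rfl, Nat.zero_le _, .refl, .single hr⟩

/-- A rotation below a graft happens inside `l`, inside `r`, or moves the grafted root one
step further down the left border. -/
lemma exists_graft_of_rot_graft {l r t : BinTree} {p : ℕ} (hp : p ≤ r.leftBorder)
    (h : Rot t (graft l r p)) :
    ∃ l' r' p', t = graft l' r' p' ∧ p' ≤ r'.leftBorder ∧ TamariLE l' l ∧ TamariLE r' r := by
  induction r generalizing p t with
  | leaf =>
    obtain rfl : p = 0 := by simpa [leftBorder] using hp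
    exact exists_graft_of_rot_node h
  | node a b iha _ =>
    cases p with
    | zero => exact exists_graft_of_rot_node h
    | succ p =>
      simp only [leftBorder, Nat.add_le_add_iff_right] at hp
      rw [graft_succ_node] at h
      cases h with
      | root _ B C =>
        refine ⟨l, node (node a B) C, p + 2, rfl, ?_, .refl, .single (Rot.root a B C)⟩
        simp only [leftBorder]; omega
      | left _ ha =>
        obtain ⟨l', a', p', rfl, hp', hl, ha'⟩ := iha hp ha
        exact ⟨l', node a' b, p' + 1, rfl, by simp [leftBorder, hp'], hl, ha'.node_left b⟩
      | right _ hb =>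
        exact ⟨l, node a _, p + 1, rfl, by simp [leftBorder, hp], .refl,
          TamariLE.node_right a (.single hb)⟩

lemma tamariLE_node_iff {t L R : BinTree} :
    TamariLE t (node L R) ↔
      ∃ l r p, t = graft l r p ∧ p ≤ r.leftBorder ∧ TamariLE l L ∧ TamariLE r R := by
  constructor
  · intro h
    induction h using Relation.ReflTransGen.head_induction_on with
    | refl => exact ⟨L, R, 0, rfl, Nat.zero_le _, .refl, .refl⟩
    | head hrot _ ih =>
      obtain ⟨l, r, p, rfl, hp, hl, hr⟩ := ih
      obtain ⟨l', r', p', rfl, hp', hl', hr'⟩ := exists_graft_of_rot_graft hp hrot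
      exact ⟨l', r', p', rfl, hp', hl'.trans hl, hr'.trans hr⟩
  · rintro ⟨l, r, p, rfl, hp, hl, hr⟩
    exact (graft_tamariLE_node l hp).trans ((hl.node_left r).trans (hr.node_right L))

def tamBelow : BinTree → Finset BinTree
  | leaf => {leaf}
  | node L R =>
    ((tamBelow L ×ˢ tamBelow R).sigma fun q => Finset.range (q.2.leftBorder + 1)).image
      fun x => graft x.1.1 x.1.2 x.2

lemma mem_tamBelow {t T : BinTree} : t ∈ tamBelow T ↔ TamariLE t T := by
  induction T generalizing t with
  | leaf =>
    rw [tamBelow, Finset.mem_singleton]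
    refine ⟨fun h => h ▸ .refl, fun h => ?_⟩
    cases t with
    | leaf => rfl
    | node a b => simpa [size] using h.size_eq
  | node L R ihL ihR =>
    simp only [tamBelow, Finset.mem_image, Finset.mem_sigma, Finset.mem_product,
      Finset.mem_range, Nat.lt_succ_iff, tamariLE_node_iff, ihL, ihR, Sigma.exists,
      Prod.exists]
    constructor
    · rintro ⟨l, r, p, ⟨⟨hl, hr⟩, hp⟩, rfl⟩
      exact ⟨l, r, p, rfl, hp, hl, hr⟩
    · rintro ⟨l, r, p, rfl, hp, hl, hr⟩
      exact ⟨l, r, p, ⟨⟨hl, hr⟩, hp⟩, rfl⟩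

lemma sum_tamBelow_node (L R : BinTree) :
    ∑ t ∈ tamBelow (node L R), (X : ℤ[X]) ^ t.leftBorder =
      X * (∑ l ∈ tamBelow L, X ^ l.leftBorder) *
        ∑ r ∈ tamBelow R, ∑ p ∈ Finset.range (r.leftBorder + 1), X ^ p := by
  rw [tamBelow, Finset.sum_image, Finset.sum_sigma, Finset.sum_product, Finset.mul_sum _ _ X,
    Finset.sum_mul_sum]
  · refine Finset.sum_congr rfl fun l _ => Finset.sum_congr rfl fun r _ => ?_
    rw [Finset.mul_sum]
    refine Finset.sum_congr rfl fun p hp => ?_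
    rw [Finset.mem_range, Nat.lt_succ_iff] at hp
    rw [leftBorder_graft l hp]
    ring
  · rintro ⟨⟨l₁, r₁⟩, p₁⟩ h₁ ⟨⟨l₂, r₂⟩, p₂⟩ h₂ h
    simp only [Finset.coe_sigma, Set.mem_sigma_iff, Finset.coe_product, Set.mem_prod,
      Finset.mem_coe, Finset.mem_range, Nat.lt_succ_iff, mem_tamBelow] at h₁ h₂
    have hl : l₁.size = l₂.size := h₁.1.1.size_eq.trans h₂.1.1.size_eq.symm
    obtain ⟨rfl, rfl, rfl⟩ := graft_inj hl h₁.2 h₂.2 h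
    rfl

lemma tamPoly_eq_sum_tamBelow (T : BinTree) :
    tamPoly T = ∑ t ∈ tamBelow T, X ^ t.leftBorder := by
  induction T with
  | leaf => simp [tamPoly, tamBelow, leftBorder]
  | node L R ihL ihR =>
    have hR1 : (tamPoly R).eval 1 = (tamBelow R).card := by
      simp [ihR, Polynomial.eval_finsetSum]
    have hrec : (X - C 1) * ∑ t ∈ tamBelow (node L R), X ^ t.leftBorder =
        X * tamPoly L * (X * tamPoly R - C ((tamPoly R).eval 1)) := by
      rw [sum_tamBelow_node, mul_left_comm, C_1, sub_one_mul_sum_geom_sum, hR1, ihL, ihR,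
        map_natCast]
    rw [tamPoly, ← hrec, mul_divByMonic_cancel_left _ (monic_X_sub_C 1)]

end BinTree

/-- For a binary tree `T` of size `n` and every `k ≥ 0`, the coefficient of
`x^k` in the Tamari polynomial `B_T` equals the number of binary trees `T'` of size `n`
with `T' ≤ T` in the Tamari order whose left border has exactly `k` nodes. -/
theorem tamPoly_coeff (T : BinTree) (k : ℕ) :
    (tamPoly T).coeff k =
      (Nat.card {T' : BinTree // T'.size = T.size ∧ TamariLE T' T ∧ T'.leftBorder = k} : ℤ) := by
  have hmem (T' : BinTree) : (T'.size = T.size ∧ TamariLE T' T ∧ T'.leftBorder = k) ↔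
      T' ∈ {t ∈ tamBelow T | t.leftBorder = k} := by
    rw [Finset.mem_filter, mem_tamBelow]
    exact ⟨fun h => h.2, fun h => ⟨h.1.size_eq, h⟩⟩
  rw [tamPoly_eq_sum_tamBelow, coeff_sum_X_pow, Nat.card_congr (Equiv.subtypeEquivRight hmem),
    Nat.card_eq_finsetCard]
end

section
/- Let T ≤ T' be binary trees of size n in the Tamari order and let IP[T,T'] be the poset on {1,…,n} whose relations are exactly those of dec(T) together with those of inc(T'). Then the linear extensions of IP[T,T'] are exactly the linear extensions of the trees in the Tamari interval [T,T']: ExtL(IP[T,T']) = ⋃_{T ≤ S ≤ T'} ExtL(S). -/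
open Polynomial

open BinTree

/-! Let `ofWord w` be the binary search tree obtained by inserting the letters of `w` (first
letter at the root); the reverse of `w` is a linear extension of `ofWord w`. Rotations only
add decreasing relations and only remove increasing ones, so every tree of `[T,T']` contains
`dec(T)` and `inc(T')`. Conversely, let `σ` extend `dec(T)` and let `r` be its last letter.
Then `r` has no decreasing parent in `T`, so it lies on the left border of `T`, and right
rotations along that border bring `r` to the root without losing a decreasing relation;
recursing on the letters below and above `r` gives `T ≤ ofWord σ.reverse`. Symmetrically,
`σ` extending `inc(T')` gives `ofWord σ.reverse ≤ T'`.
-/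

namespace BinTree

theorem inSub_bounds {T : BinTree} {a b : ℕ} (h : inSub T a b) :
    1 ≤ a ∧ a ≤ T.size ∧ 1 ≤ b ∧ b ≤ T.size := by
  induction T generalizing a b with
  | leaf => exact h.elim
  | node l r ihl ihr =>
    simp only [size]
    rcases h with ⟨rfl, h1, h2⟩ | h | ⟨-, -, h⟩
    · omega
    · have := ihl h; omega
    · have := ihr h; omega

theorem eq_leaf_of_size_eq_zero {T : BinTree} (h : T.size = 0) : T = leaf := by
  cases T with
  | leaf => rfl
  | node l r => simp [size] at h

theorem inSub_node_root {l r : BinTree} {a : ℕ} (h1 : 1 ≤ a) (h2 : a ≤ (node l r).size) :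
    inSub (node l r) a (l.size + 1) :=
  Or.inl ⟨rfl, h1, h2⟩

theorem inSub_node_left {l r : BinTree} {a b : ℕ} (h : inSub l a b) :
    inSub (node l r) a b :=
  Or.inr (Or.inl h)

theorem inSub_node_right {l r : BinTree} {a b : ℕ} (h : inSub r a b) :
    inSub (node l r) (a + (l.size + 1)) (b + (l.size + 1)) := by
  have := inSub_bounds h
  exact Or.inr (Or.inr ⟨by omega, by omega, by simpa using h⟩)

theorem incRel_node_left {l r : BinTree} {a b : ℕ} (h : incRel l a b) :
    incRel (node l r) a b :=
  ⟨h.1, h.2.1, inSub_node_left h.2.2⟩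

theorem incRel_node_right {l r : BinTree} {a b : ℕ} (h : incRel r a b) :
    incRel (node l r) (a + (l.size + 1)) (b + (l.size + 1)) :=
  ⟨by simpa using h.1, by simpa using h.2.1, inSub_node_right h.2.2⟩

theorem decRel_node_left {l r : BinTree} {a b : ℕ} (h : decRel l a b) :
    decRel (node l r) a b :=
  ⟨h.1, h.2.1, inSub_node_left h.2.2⟩

theorem decRel_node_right {l r : BinTree} {a b : ℕ} (h : decRel r a b) :
    decRel (node l r) (a + (l.size + 1)) (b + (l.size + 1)) :=
  ⟨by simpa using h.1, by simpa using h.2.1, inSub_node_right h.2.2⟩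

theorem Rot.size_eq_s6 {T U : BinTree} (h : Rot T U) : T.size = U.size := by
  induction h <;> simp only [size] <;> omega

theorem TamariLE.size_eq_s6 {T U : BinTree} (h : TamariLE T U) : T.size = U.size := by
  induction h with
  | refl => rfl
  | tail _ hrot ih => exact ih.trans hrot.size_eq_s6

theorem TamariLE.node_mono {L L' R R' : BinTree} (hL : TamariLE L L') (hR : TamariLE R R') :
    TamariLE (node L R) (node L' R') :=
  (hL.lift (node · R) fun _ _ => Rot.left R).trans (hR.lift (node L' ·) fun _ _ => Rot.right L')

theorem Rot.decRel {T U : BinTree} (h : Rot T U) {a b : ℕ} (hd : decRel T a b) :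
    decRel U a b := by
  obtain ⟨hba, hne, hs⟩ := hd
  refine ⟨hba, hne, ?_⟩
  induction h generalizing a b with
  | root A B C =>
    simp only [inSub, size] at hs ⊢
    rcases hs with ⟨rfl, h1, h2⟩ | (⟨rfl, h1, h2⟩ | hA | ⟨h1, h2, hB⟩) | ⟨h1, h2, hC⟩
    · exact Or.inr (Or.inr ⟨by omega, by omega, Or.inl ⟨by omega, by omega, by omega⟩⟩)
    · exact Or.inl ⟨rfl, by omega, by omega⟩
    · exact Or.inr (Or.inl hA)
    · exact Or.inr (Or.inr ⟨h1, h2, Or.inr (Or.inl hB)⟩)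
    · refine Or.inr (Or.inr ⟨by omega, by omega, Or.inr (Or.inr ⟨by omega, by omega, ?_⟩)⟩)
      convert hC using 1 <;> omega
  | left R hrot ih =>
    rcases hs with ⟨rfl, h1, h2⟩ | hs | hs
    · exact Or.inl ⟨by rw [hrot.size_eq_s6], h1, by simp only [hrot.size_eq_s6] at h2 ⊢; omega⟩
    · exact Or.inr (Or.inl (ih hba hne hs))
    · exact Or.inr (Or.inr (by rwa [← hrot.size_eq_s6]))
  | right L hrot ih =>
    rcases hs with ⟨rfl, h1, h2⟩ | hs | ⟨h1, h2, hs⟩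
    · exact Or.inl ⟨rfl, h1, by simp only [hrot.size_eq_s6] at h2 ⊢; omega⟩
    · exact Or.inr (Or.inl hs)
    · exact Or.inr (Or.inr ⟨h1, h2, ih (by omega) (by omega) hs⟩)

theorem Rot.incRel {T U : BinTree} (h : Rot T U) {a b : ℕ} (hi : incRel U a b) :
    incRel T a b := by
  obtain ⟨hab, hne, hs⟩ := hi
  refine ⟨hab, hne, ?_⟩
  induction h generalizing a b with
  | root A B C =>
    simp only [inSub, size] at hs ⊢
    rcases hs with ⟨rfl, h1, -⟩ | hA | ⟨h1, h2, ⟨hb, h3, h4⟩ | hB | ⟨h3, h4, hC⟩⟩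
    · exact Or.inr (Or.inl (Or.inl ⟨rfl, by omega, by omega⟩))
    · exact Or.inr (Or.inl (Or.inr (Or.inl hA)))
    · exact Or.inl ⟨by omega, by omega, by omega⟩
    · exact Or.inr (Or.inl (Or.inr (Or.inr ⟨h1, h2, hB⟩)))
    · refine Or.inr (Or.inr ⟨by omega, by omega, ?_⟩)
      convert hC using 1 <;> omega
  | left R hrot ih =>
    rcases hs with ⟨rfl, h1, h2⟩ | hs | hs
    · exact Or.inl ⟨by rw [hrot.size_eq_s6], h1, by simp only [hrot.size_eq_s6] at h2 ⊢; omega⟩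
    · exact Or.inr (Or.inl (ih hab hne hs))
    · exact Or.inr (Or.inr (by rwa [hrot.size_eq_s6]))
  | right L hrot ih =>
    rcases hs with ⟨rfl, h1, h2⟩ | hs | ⟨h1, h2, hs⟩
    · exact Or.inl ⟨rfl, h1, by simp only [hrot.size_eq_s6] at h2 ⊢; omega⟩
    · exact Or.inr (Or.inl hs)
    · exact Or.inr (Or.inr ⟨h1, h2, ih (by omega) (by omega) hs⟩)

theorem TamariLE.decRel {T U : BinTree} (h : TamariLE T U) {a b : ℕ} (hd : decRel T a b) :
    decRel U a b := by
  induction h with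
  | refl => exact hd
  | tail _ hrot ih => exact hrot.decRel ih

theorem TamariLE.incRel {T U : BinTree} (h : TamariLE T U) {a b : ℕ} (hi : incRel U a b) :
    incRel T a b := by
  induction h using Relation.ReflTransGen.head_induction_on with
  | refl => exact hi
  | head hrot _ ih => exact hrot.incRel ih

theorem exists_node_tamariLE_of_forall_not_incRel {T : BinTree} {k : ℕ} (hk1 : 1 ≤ k)
    (hk2 : k ≤ T.size) (hk : ∀ b, ¬ incRel T k b) :
    ∃ P Q : BinTree, P.size = k - 1 ∧ Q.size = T.size - k ∧ TamariLE (node P Q) T ∧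
      (∀ a b, incRel P a b → incRel T a b) ∧
      (∀ a b, incRel Q a b → incRel T (a + k) (b + k)) := by
  induction T generalizing k with
  | leaf => simp only [size] at hk2; omega
  | node l r _ ihr =>
    obtain hlt | rfl | hgt := lt_trichotomy k (l.size + 1)
    · exact absurd ⟨hlt, hlt.ne, inSub_node_root hk1 hk2⟩ (hk _)
    · exact ⟨l, r, rfl, by simp only [size]; omega, .refl, fun _ _ => incRel_node_left,
        fun _ _ => incRel_node_right⟩
    · have hk' : ∀ b, ¬ incRel r (k - (l.size + 1)) b := fun b hb => by
        have := incRel_node_right (l := l) hb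
        exact hk _ (by rwa [Nat.sub_add_cancel hgt.le] at this)
      obtain ⟨P, Q, hP, hQ, hPQ, hincP, hincQ⟩ :=
        ihr (by omega) (by simp only [size] at hk2; omega) hk'
      refine ⟨node l P, Q, by simp only [size]; omega, by simp only [size] at hQ ⊢; omega,
        .head (Rot.root l P Q) (TamariLE.node_mono .refl hPQ), ?_, fun a b hab => ?_⟩
      · rintro a b ⟨hab, hne, ⟨rfl, h1, h2⟩ | hs | ⟨h1, h2, hs⟩⟩
        · exact ⟨hab, hne, inSub_node_root h1 (by simp only [size] at h2 ⊢; omega)⟩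
        · exact ⟨hab, hne, inSub_node_left hs⟩
        · have := incRel_node_right (l := l) (hincP _ _ ⟨by omega, by omega, hs⟩)
          simpa [Nat.sub_add_cancel h1.le, Nat.sub_add_cancel h2.le] using this
      · have := incRel_node_right (l := l) (hincQ a b hab)
        convert this using 1 <;> omega

theorem exists_tamariLE_node_of_forall_not_decRel {T : BinTree} {k : ℕ} (hk1 : 1 ≤ k)
    (hk2 : k ≤ T.size) (hk : ∀ b, ¬ decRel T k b) :
    ∃ P Q : BinTree, P.size = k - 1 ∧ Q.size = T.size - k ∧ TamariLE T (node P Q) ∧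
      (∀ a b, decRel P a b → decRel T a b) ∧
      (∀ a b, decRel Q a b → decRel T (a + k) (b + k)) := by
  induction T generalizing k with
  | leaf => simp only [size] at hk2; omega
  | node l r ihl _ =>
    obtain hlt | rfl | hgt := lt_trichotomy k (l.size + 1)
    · obtain ⟨P, Q, hP, hQ, hPQ, hdecP, hdecQ⟩ :=
        ihl hk1 (by omega) fun b hb => hk b (decRel_node_left hb)
      refine ⟨P, node Q r, hP, by simp only [size] at hQ ⊢; omega,
        (TamariLE.node_mono hPQ .refl).tail (Rot.root P Q r),
        fun a b hab => decRel_node_left (hdecP a b hab), ?_⟩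
      rintro a b ⟨hba, hne, ⟨rfl, h1, h2⟩ | hs | ⟨h1, h2, hs⟩⟩
      · exact ⟨by omega, by omega, by
          convert inSub_node_root (l := l) (r := r) (a := a + k) (by omega)
            (by simp only [size] at h2 ⊢; omega) using 1; omega⟩
      · exact decRel_node_left (hdecQ a b ⟨hba, hne, hs⟩)
      · have := decRel_node_right (l := l) ⟨by omega, by omega, hs⟩
        convert this using 1 <;> omega
    · exact ⟨l, r, rfl, by simp only [size]; omega, .refl, fun _ _ => decRel_node_left,
        fun _ _ => decRel_node_right⟩
    · exact absurd ⟨hgt, hgt.ne', inSub_node_root hk1 hk2⟩ (hk _)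

def lowWord (r : ℕ) (t : List ℕ) : List ℕ := t.filter (· < r)

def highWord (r : ℕ) (t : List ℕ) : List ℕ := (t.filter (r < ·)).map (· - r)

/-- Binary search tree insertion of the letters of `v`, first letter `r` at the root; the
letters `> r` are shifted down by `r` so that the right subtree is again labelled `1, 2, …`. -/
def ofWord : List ℕ → BinTree
  | [] => leaf
  | r :: t => node (ofWord (lowWord r t)) (ofWord (highWord r t))
termination_by v => v.length
decreasing_by
  all_goals
    simp only [lowWord, highWord, List.length_map, List.length_cons]
    exact Nat.lt_succ_of_le (List.length_filter_le _ _)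

section Word

variable {r n : ℕ} {t : List ℕ}

theorem mem_of_perm_range'_cons (h : (r :: t).Perm (List.range' 1 n)) {b : ℕ} :
    b ∈ t ↔ 1 ≤ b ∧ b ≤ n ∧ b ≠ r := by
  obtain ⟨hrt, -⟩ := List.nodup_cons.1 (h.nodup_iff.2 List.nodup_range')
  have hmem : b ∈ r :: t ↔ 1 ≤ b ∧ b < 1 + n := h.mem_iff.trans List.mem_range'_1
  constructor
  · intro hb
    have := hmem.1 (List.mem_cons_of_mem r hb)
    exact ⟨this.1, by omega, by rintro rfl; exact hrt hb⟩
  · rintro ⟨h1, h2, hne⟩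
    exact (List.mem_cons.1 (hmem.2 ⟨h1, by omega⟩)).resolve_left hne

theorem bounds_of_perm_range'_cons (h : (r :: t).Perm (List.range' 1 n)) : 1 ≤ r ∧ r ≤ n := by
  have := List.mem_range'_1.1 (h.subset List.mem_cons_self)
  omega

theorem perm_range'_lowWord (h : (r :: t).Perm (List.range' 1 n)) :
    (lowWord r t).Perm (List.range' 1 (r - 1)) := by
  have htnd := (List.nodup_cons.1 (h.nodup_iff.2 List.nodup_range')).2
  rw [lowWord, List.perm_ext_iff_of_nodup (htnd.filter _) List.nodup_range']
  intro b
  simp only [List.mem_filter, mem_of_perm_range'_cons h, List.mem_range'_1,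
    decide_eq_true_eq]
  have := bounds_of_perm_range'_cons h
  omega

theorem perm_range'_highWord (h : (r :: t).Perm (List.range' 1 n)) :
    (highWord r t).Perm (List.range' 1 (n - r)) := by
  have htnd := (List.nodup_cons.1 (h.nodup_iff.2 List.nodup_range')).2
  have hnd : (highWord r t).Nodup := (htnd.filter _).map_on fun x hx y hy hxy => by
    simp only [List.mem_filter, decide_eq_true_eq] at hx hy
    omega
  rw [List.perm_ext_iff_of_nodup hnd List.nodup_range']
  intro b
  simp only [highWord, List.mem_map, List.mem_filter, mem_of_perm_range'_cons h,
    List.mem_range'_1, decide_eq_true_eq]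
  constructor
  · rintro ⟨a, ⟨⟨-, ha, -⟩, hra⟩, rfl⟩
    omega
  · intro hb
    exact ⟨b + r, ⟨⟨by omega, by omega, by omega⟩, by omega⟩, by omega⟩

theorem pairwise_lowWord {R : ℕ → ℕ → Prop} (h : t.Pairwise R) : (lowWord r t).Pairwise R :=
  h.filter _

theorem pairwise_highWord {R : ℕ → ℕ → Prop} (h : t.Pairwise R) :
    (highWord r t).Pairwise fun a b => R (a + r) (b + r) := by
  rw [highWord, List.pairwise_map, List.pairwise_filter]
  refine h.imp fun {a b} hab ha hb => ?_
  simp only [decide_eq_true_eq] at ha hb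
  rwa [Nat.sub_add_cancel ha.le, Nat.sub_add_cancel hb.le]

theorem pairwise_of_lowWord_highWord {R₁ R₂ : ℕ → ℕ → Prop} (h₁ : (lowWord r t).Pairwise R₁)
    (h₂ : (highWord r t).Pairwise R₂) :
    t.Pairwise fun a b => (a < r → b < r → R₁ a b) ∧ (r < a → r < b → R₂ (a - r) (b - r)) := by
  rw [lowWord, List.pairwise_filter] at h₁
  rw [highWord, List.pairwise_map, List.pairwise_filter] at h₂
  exact (h₁.and h₂).imp fun ⟨h₁, h₂⟩ =>
    ⟨fun ha hb => h₁ (by simpa using ha) (by simpa using hb),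
      fun ha hb => h₂ (by simpa using ha) (by simpa using hb)⟩

end Word

theorem ofWord_cons (r : ℕ) (t : List ℕ) :
    ofWord (r :: t) = node (ofWord (lowWord r t)) (ofWord (highWord r t)) := by
  rw [ofWord]

theorem not_rel_head_of_perm_range' {r : ℕ} {t : List ℕ} {T : BinTree} {rel : ℕ → ℕ → Prop}
    (hp : (r :: t).Perm (List.range' 1 T.size)) (h : (r :: t).Pairwise fun a b => ¬ rel a b)
    (hrel : ∀ a b, rel a b → bstRel T a b) (b : ℕ) : ¬ rel r b := fun hb => by
  obtain ⟨hne, hs⟩ := hrel r b hb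
  have := inSub_bounds hs
  exact (List.pairwise_cons.1 h).1 b
    ((mem_of_perm_range'_cons hp).2 ⟨by omega, by omega, hne.symm⟩) hb

theorem size_ofWord {v : List ℕ} {n : ℕ} (hp : v.Perm (List.range' 1 n)) :
    (ofWord v).size = n := by
  induction v using ofWord.induct generalizing n with
  | case1 => simpa [ofWord, size] using hp.length_eq
  | case2 r t ihl ihh =>
    have := bounds_of_perm_range'_cons hp
    rw [ofWord_cons, size, ihl (perm_range'_lowWord hp), ihh (perm_range'_highWord hp)]
    omega

theorem pairwise_not_bstRel_ofWord {v : List ℕ} {n : ℕ} (hp : v.Perm (List.range' 1 n)) :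
    v.Pairwise fun a b => ¬ bstRel (ofWord v) a b := by
  induction v using ofWord.induct generalizing n with
  | case1 => exact List.Pairwise.nil
  | case2 r t ihl ihh =>
    have hL := size_ofWord (perm_range'_lowWord hp)
    have hr := bounds_of_perm_range'_cons hp
    have hmem : ∀ {b}, b ∈ t → b ≠ r := fun hb => ((mem_of_perm_range'_cons hp).1 hb).2.2
    rw [ofWord_cons, List.pairwise_cons]
    constructor
    · rintro b hb ⟨-, ⟨rfl, -, -⟩ | hs | ⟨hs, -, -⟩⟩
      · exact hmem hb (by omega)
      · have := inSub_bounds hs; omega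
      · omega
    · refine (pairwise_of_lowWord_highWord (ihl (perm_range'_lowWord hp))
        (ihh (perm_range'_highWord hp))).imp_of_mem fun {a b} ha hb ⟨hlow, hhigh⟩ => ?_
      rintro ⟨hne, ⟨rfl, -, -⟩ | hs | ⟨h1, h2, hs⟩⟩
      · exact hmem hb (by omega)
      · have := inSub_bounds hs
        exact hlow (by omega) (by omega) ⟨hne, hs⟩
      · exact hhigh (by omega) (by omega) ⟨by omega, by rwa [hL, Nat.sub_add_cancel hr.1] at hs⟩

theorem tamariLE_ofWord_of_pairwise_not_incRel {v : List ℕ} {n : ℕ} {T : BinTree}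
    (hp : v.Perm (List.range' 1 n)) (hT : T.size = n)
    (hv : v.Pairwise fun a b => ¬ incRel T a b) : TamariLE (ofWord v) T := by
  induction v using ofWord.induct generalizing n T with
  | case1 =>
    rw [eq_leaf_of_size_eq_zero (hT.trans (by simpa using hp.length_eq.symm)), ofWord]
    exact Relation.ReflTransGen.refl
  | case2 r t ihl ihh =>
    have hr := bounds_of_perm_range'_cons hp
    have hroot := not_rel_head_of_perm_range' (hT ▸ hp) hv fun _ _ => And.right
    obtain ⟨P, Q, hP, hQ, hPQ, hincP, hincQ⟩ :=
      exists_node_tamariLE_of_forall_not_incRel hr.1 (by omega) hroot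
    have ht := (List.pairwise_cons.1 hv).2
    rw [ofWord_cons]
    refine .trans (TamariLE.node_mono ?_ ?_) hPQ
    · exact ihl (perm_range'_lowWord hp) hP
        ((pairwise_lowWord ht).imp fun h hinc => h (hincP _ _ hinc))
    · exact ihh (perm_range'_highWord hp) (by omega)
        ((pairwise_highWord ht).imp fun h hinc => h (hincQ _ _ hinc))

theorem tamariLE_ofWord_of_pairwise_not_decRel {v : List ℕ} {n : ℕ} {T : BinTree}
    (hp : v.Perm (List.range' 1 n)) (hT : T.size = n)
    (hv : v.Pairwise fun a b => ¬ decRel T a b) : TamariLE T (ofWord v) := by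
  induction v using ofWord.induct generalizing n T with
  | case1 =>
    rw [eq_leaf_of_size_eq_zero (hT.trans (by simpa using hp.length_eq.symm)), ofWord]
    exact Relation.ReflTransGen.refl
  | case2 r t ihl ihh =>
    have hr := bounds_of_perm_range'_cons hp
    have hroot := not_rel_head_of_perm_range' (hT ▸ hp) hv fun _ _ => And.right
    obtain ⟨P, Q, hP, hQ, hPQ, hdecP, hdecQ⟩ :=
      exists_tamariLE_node_of_forall_not_decRel hr.1 (by omega) hroot
    have ht := (List.pairwise_cons.1 hv).2
    rw [ofWord_cons]
    refine hPQ.trans (TamariLE.node_mono ?_ ?_)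
    · exact ihl (perm_range'_lowWord hp) hP
        ((pairwise_lowWord ht).imp fun h hdec => h (hdecP _ _ hdec))
    · exact ihh (perm_range'_highWord hp) (by omega)
        ((pairwise_highWord ht).imp fun h hdec => h (hdecQ _ _ hdec))

end BinTree

section LinearExtension

variable {n : ℕ}

def Equiv.Perm.word (σ : Equiv.Perm (Fin n)) : List ℕ := List.ofFn fun i => (σ i : ℕ) + 1

theorem Equiv.Perm.reverse_word_perm_range' (σ : Equiv.Perm (Fin n)) :
    σ.word.reverse.Perm (List.range' 1 n) := by
  refine (List.reverse_perm _).trans ?_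
  have hinj : Function.Injective fun i => (σ i : ℕ) + 1 := fun i j h =>
    σ.injective (Fin.ext (by simpa using h))
  rw [Equiv.Perm.word, List.perm_ext_iff_of_nodup (List.nodup_ofFn.2 hinj) List.nodup_range']
  intro b
  simp only [List.mem_ofFn, List.mem_range'_1]
  constructor
  · rintro ⟨i, rfl⟩
    omega
  · intro hb
    exact ⟨σ.symm ⟨b - 1, by omega⟩, by rw [σ.apply_symm_apply]; show b - 1 + 1 = b; omega⟩

theorem isLinExt_iff_pairwise_reverse_word {rel : ℕ → ℕ → Prop} (hrel : ∀ a, ¬ rel a a)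
    (σ : Equiv.Perm (Fin n)) :
    IsLinExt n rel σ ↔ σ.word.reverse.Pairwise fun a b => ¬ rel a b := by
  simp only [Equiv.Perm.word, List.pairwise_reverse, List.pairwise_ofFn]
  constructor
  · exact fun h i j hij hji => (h j i hji).not_gt hij
  · intro h i j hij
    rcases lt_trichotomy i j with hlt | rfl | hgt
    · exact hlt
    · exact (hrel _ hij).elim
    · exact (h hgt hij).elim

end LinearExtension

/-- Let `T ≤ T'` be binary trees of size `n` in the Tamari order and let
`IP[T,T']` be the poset on `{1,…,n}` whose relations are exactly those of `dec(T)` together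
with those of `inc(T')`. The linear extensions of `IP[T,T']` are exactly the linear
extensions of the trees in the Tamari interval `[T,T']`. -/
theorem linExt_intervalPoset (T T' : BinTree) (h : TamariLE T T')
    (σ : Equiv.Perm (Fin T.size)) :
    IsLinExt T.size (IPrel T T') σ ↔
      ∃ S : BinTree, S.size = T.size ∧ TamariLE T S ∧ TamariLE S T' ∧
        IsLinExt T.size (bstRel S) σ := by
  constructor
  · intro hσ
    have hp := σ.reverse_word_perm_range'
    have hw := (isLinExt_iff_pairwise_reverse_word
      (fun a h => h.elim (fun h => h.2.1 rfl) fun h => h.2.1 rfl) σ).1 hσ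
    refine ⟨ofWord σ.word.reverse, size_ofWord hp,
      tamariLE_ofWord_of_pairwise_not_decRel hp rfl (hw.imp fun h hd => h (.inl hd)),
      tamariLE_ofWord_of_pairwise_not_incRel hp h.size_eq_s6.symm (hw.imp fun h hi => h (.inr hi)),
      (isLinExt_iff_pairwise_reverse_word (fun a h => h.1 rfl) σ).2
        (pairwise_not_bstRel_ofWord hp)⟩
  · rintro ⟨S, -, hTS, hST, hS⟩ i j hij
    exact hS i j (hij.elim (fun hd => (hTS.decRel hd).2) fun hi => (hST.incRel hi).2)
end
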